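/- Let J₀ be a 2×2 real matrix with trace zero and determinant μ₀² > 0, and let J(ε) = (I₂ + εD)⁻¹ J₀ with D = (d_{ij}). Define B(ε) = √(4 det J(ε) − (tr J(ε))²)/2 for small ε (the imaginary part of the eigenvalues of J(ε)). Then B is differentiable at 0 and B'(0) = −(μ₀/2)(d₁₁ + d₂₂). -/

import Mathlib

open Matrix Filter

private lemma key14 (J₀ D : Matrix (Fin 2) (Fin 2) ℝ) (μ₀ : ℝ)
    (htr : J₀.trace = 0) (hdet : J₀.det = μ₀ ^ 2)
    (ε : ℝ) (h : (1 + ε*D 0 0)*(1 + ε*D 1 1) - (ε*D 0 1)*(ε*D 1 0) ≠ 0) :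
    4 * ((1 + ε • D)⁻¹ * J₀).det - ((1 + ε • D)⁻¹ * J₀).trace ^ 2 =
      4*μ₀^2*((1 + ε*D 0 0)*(1 + ε*D 1 1) - (ε*D 0 1)*(ε*D 1 0))⁻¹
      - (ε*(D 1 1 * J₀ 0 0 - D 0 1 * J₀ 1 0 - D 1 0 * J₀ 0 1 + D 0 0 * J₀ 1 1)
          *((1 + ε*D 0 0)*(1 + ε*D 1 1) - (ε*D 0 1)*(ε*D 1 0))⁻¹)^2 := by
  have htr2 : J₀ 1 1 = - J₀ 0 0 := by
    have := htr; simp [Matrix.trace_fin_two] at this; linarith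
  have hdet' : J₀ 0 0 * J₀ 1 1 - J₀ 0 1 * J₀ 1 0 = μ₀^2 := by
    rw [← hdet, Matrix.det_fin_two]
  rw [Matrix.inv_def]
  simp only [Matrix.adjugate_fin_two, Matrix.det_fin_two, Matrix.trace_fin_two,
    Matrix.mul_apply, Fin.sum_univ_two, Matrix.smul_apply, Matrix.add_apply,
    Matrix.one_apply, Ring.inverse_eq_inv', Matrix.of_apply, Matrix.cons_val',
    Matrix.cons_val_zero, Matrix.cons_val_one, Matrix.head_cons, Matrix.head_fin_const,
    Matrix.empty_val', Matrix.cons_val_fin_one, smul_eq_mul]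
  norm_num
  rw [htr2] at hdet' ⊢
  rw [← hdet']
  generalize hg : (1 + ε * D 0 0) * (1 + ε * D 1 1) - ε * D 0 1 * (ε * D 1 0) = x at h ⊢
  field_simp
  subst hg
  ring

/-- If `J₀` has trace `0` and determinant `μ₀² > 0`, then the imaginary part
`B(ε) = √(4 det J(ε) - (tr J(ε))²)/2` of the eigenvalues of `J(ε) = (I₂ + εD)⁻¹ J₀`
is differentiable at `0` with `B'(0) = -(μ₀/2)(d₁₁ + d₂₂)`. -/
theorem stmt14 (J₀ D : Matrix (Fin 2) (Fin 2) ℝ) (μ₀ : ℝ) (hμ : 0 < μ₀)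
    (htr : J₀.trace = 0) (hdet : J₀.det = μ₀ ^ 2) :
    HasDerivAt (fun ε : ℝ =>
        Real.sqrt (4 * ((1 + ε • D)⁻¹ * J₀).det - ((1 + ε • D)⁻¹ * J₀).trace ^ 2) / 2)
      (-(μ₀ / 2) * (D 0 0 + D 1 1)) 0 := by
  set p := D 0 0 with hp
  set q := D 0 1 with hq
  set r := D 1 0 with hr
  set s := D 1 1 with hs
  set K := s * J₀ 0 0 - q * J₀ 1 0 - r * J₀ 0 1 + p * J₀ 1 1 with hK
  set δ : ℝ → ℝ := fun ε => (1 + ε*p)*(1 + ε*s) - (ε*q)*(ε*r) with hδ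
  have hδ0 : δ 0 = 1 := by simp [hδ]
  have hcont : ContinuousAt δ 0 := by fun_prop
  have hne : ∀ᶠ ε in nhds (0:ℝ), δ ε ≠ 0 :=
    hcont.eventually_ne (by rw [hδ0]; norm_num)
  -- derivative of the model function
  have h1 : HasDerivAt (fun ε : ℝ => 1 + ε * p) p 0 := by
    simpa using ((hasDerivAt_id (0:ℝ)).mul_const p).const_add 1
  have h2 : HasDerivAt (fun ε : ℝ => 1 + ε * s) s 0 := by
    simpa using ((hasDerivAt_id (0:ℝ)).mul_const s).const_add 1
  have h3 : HasDerivAt (fun ε : ℝ => (ε * q) * (ε * r)) 0 0 := by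
    simpa [Pi.mul_def] using ((hasDerivAt_id (0:ℝ)).mul_const q).mul ((hasDerivAt_id (0:ℝ)).mul_const r)
  have hδd : HasDerivAt δ (p + s) 0 := by
    have := (h1.mul h2).sub h3
    simpa [hδ, Pi.mul_def, Pi.sub_def] using this
  have hδ0' : δ 0 ≠ 0 := by rw [hδ0]; norm_num
  have hinv : HasDerivAt (fun ε => (δ ε)⁻¹) (-(p + s)) 0 := by
    simpa [hδ0, Pi.inv_def] using hδd.inv hδ0'
  have hA : HasDerivAt (fun ε => 4 * μ₀ ^ 2 * (δ ε)⁻¹) (4 * μ₀ ^ 2 * -(p + s)) 0 :=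
    hinv.const_mul _
  have hf : HasDerivAt (fun ε => ε * K * (δ ε)⁻¹) K 0 := by
    have := ((hasDerivAt_id (0:ℝ)).mul_const K).mul hinv
    simpa [hδ0, Pi.mul_def] using this
  have hB : HasDerivAt (fun ε => (ε * K * (δ ε)⁻¹) ^ 2) 0 0 := by
    have := hf.pow 2
    simpa [Pi.pow_def] using this
  have hsub : HasDerivAt (fun ε => 4 * μ₀ ^ 2 * (δ ε)⁻¹ - (ε * K * (δ ε)⁻¹) ^ 2)
      (4 * μ₀ ^ 2 * -(p + s) - 0) 0 := hA.sub hB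
  have hval : 4 * μ₀ ^ 2 * (δ 0)⁻¹ - (0 * K * (δ 0)⁻¹) ^ 2 = 4 * μ₀ ^ 2 := by
    rw [hδ0]; ring
  have hsq : Real.sqrt (4 * μ₀ ^ 2) = 2 * μ₀ := by
    rw [show (4 : ℝ) * μ₀ ^ 2 = (2 * μ₀) ^ 2 by ring, Real.sqrt_sq (by positivity)]
  have hsqrt : HasDerivAt
      (fun ε => Real.sqrt (4 * μ₀ ^ 2 * (δ ε)⁻¹ - (ε * K * (δ ε)⁻¹) ^ 2) / 2)
      (-(μ₀ / 2) * (p + s)) 0 := by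
    have h4 := (hsub.sqrt (by rw [hval]; positivity)).div_const 2
    refine h4.congr_deriv ?_
    rw [hval, hsq]
    field_simp
    ring
  refine hsqrt.congr_of_eventuallyEq ?_
  filter_upwards [hne] with ε hε
  rw [key14 J₀ D μ₀ htr hdet ε hε]
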